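/- Let d ≥ 1, ε ∈ (0,1], n ≥ 1, and suppose σ : ℝ → ℝ (twice continuously differentiable) and A : ℝ^d → ℝ^{d×d} (continuously differentiable, with column-wise divergence ∇·A) satisfy the second inequality of the Lipschitz-type Assumption with constant M ≥ 0. Fix parameters (a_i, w_i, b_i) ∈ ℝ × ℝ^{2d} × ℝ with w_i = (w_{i,x}, w_{i,y}), i = 1,…,n, and let ξ₁,…,ξ_n be independent Rademacher random variables. Then E_ξ [ sup_{z=(x,y) ∈ [0,1]^{2d}} (1/n) Σ_{i=1}^n ξ_i a_i ε (∇·A(x))^T w_{i,x} σ'((w_i·z + b_i)/ε) ] ≤ ε^{−1} M · E_ξ ‖ (1/n) Σ_{i=1}^n ξ_i |a_i| (‖w_i‖₁ + |b_i|)² w_i ‖₁. -/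

import Mathlib

open MeasureTheory Real

noncomputable section

/-- Vectors in `ℝ^d`. -/
abbrev Vec (d : ℕ) := Fin d → ℝ

/-- Inner product on `ℝ^{2d}`, with vectors split as pairs `(x-part, y-part)`. -/
def dot2 {d : ℕ} (w z : Vec d × Vec d) : ℝ :=
  (∑ j, w.1 j * z.1 j) + (∑ j, w.2 j * z.2 j)

/-- ℓ¹ norm on `ℝ^{2d}`. -/
def l1 {d : ℕ} (w : Vec d × Vec d) : ℝ :=
  (∑ j, |w.1 j|) + (∑ j, |w.2 j|)

/-- Quadratic form `v^T B v`. -/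
def quadForm {d : ℕ} (B : Matrix (Fin d) (Fin d) ℝ) (v : Vec d) : ℝ :=
  ∑ j, ∑ k, v j * B j k * v k

/-- Membership of `z = (x, y)` in the unit cube `[0,1]^{2d}`. -/
def InCube {d : ℕ} (z : Vec d × Vec d) : Prop :=
  (∀ j, z.1 j ∈ Set.Icc (0:ℝ) 1) ∧ (∀ j, z.2 j ∈ Set.Icc (0:ℝ) 1)

/-- The Rademacher sign (`+1` or `-1`) associated with a Boolean. A tuple of `n` independent
Rademacher random variables is distributed as the uniform measure on `{-1,1}^n`, so the
expectation of any functional of `(ξ₁, …, ξ_n)` equals the average over all `2^n` sign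
patterns `s : Fin n → Bool`. -/
def rsign (s : Bool) : ℝ := if s then 1 else -1

/-! ### Auxiliary lemmas -/

lemma abs_rsign_mul (b : Bool) (x : ℝ) : |rsign b * x| = |x| := by
  cases b <;> simp [rsign]

lemma rsign_not (b : Bool) : rsign (!b) = -rsign b := by cases b <;> simp [rsign]

section Abstract

variable {T : Type} [Nonempty T]

omit [Nonempty T] in
lemma my_bdd {f : T → ℝ} {C : ℝ} (h : ∀ t, |f t| ≤ C) :
    BddAbove (Set.range f) := ⟨C, by rintro _ ⟨t, rfl⟩; exact (abs_le.1 (h t)).2⟩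

lemma pair_sup {h F G : T → ℝ} {Ch CG : ℝ}
    (hh : ∀ t, |h t| ≤ Ch) (hG : ∀ t, |G t| ≤ CG)
    (hFG : ∀ t u, |F t - F u| ≤ |G t - G u|) :
    (⨆ t, h t + F t) + (⨆ t, h t - F t) ≤ (⨆ t, h t + G t) + (⨆ t, h t - G t) := by
  have b1 : BddAbove (Set.range fun t => h t + G t) :=
    my_bdd (fun t => (abs_add_le _ _).trans (add_le_add (hh t) (hG t)))
  have b2 : BddAbove (Set.range fun t => h t - G t) :=
    my_bdd (fun t => (abs_sub _ _).trans (add_le_add (hh t) (hG t)))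
  have key : ∀ t u, (h t + F t) + (h u - F u)
      ≤ (⨆ t, h t + G t) + (⨆ t, h t - G t) := by
    intro t u
    have h1 := hFG t u
    have hF' : F t - F u ≤ |G t - G u| := (le_abs_self _).trans h1
    rcases abs_cases (G t - G u) with ⟨he, _⟩ | ⟨he, _⟩
    · have e1 : h t + G t ≤ ⨆ t, h t + G t := le_ciSup b1 t
      have e2 : h u - G u ≤ ⨆ t, h t - G t := le_ciSup b2 u
      rw [he] at hF'; linarith
    · have e1 : h u + G u ≤ ⨆ t, h t + G t := le_ciSup b1 u
      have e2 : h t - G t ≤ ⨆ t, h t - G t := le_ciSup b2 t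
      rw [he] at hF'; linarith
  have h2 : (⨆ t, h t + F t)
      ≤ ((⨆ t, h t + G t) + (⨆ t, h t - G t)) - (⨆ t, h t - F t) := by
    apply ciSup_le
    intro t
    have h3 : (⨆ u, h u - F u)
        ≤ ((⨆ t, h t + G t) + (⨆ t, h t - G t)) - (h t + F t) := by
      apply ciSup_le; intro u; linarith [key t u]
    linarith
  linarith

lemma step_update {n : ℕ} (Φ : Fin n → T → ℝ) (C : Fin n → ℝ)
    (hΦ : ∀ i t, |Φ i t| ≤ C i) (i₀ : Fin n) (Ψ : T → ℝ) (CΨ : ℝ)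
    (hΨ : ∀ t, |Ψ t| ≤ CΨ)
    (hc : ∀ t u, |Φ i₀ t - Φ i₀ u| ≤ |Ψ t - Ψ u|) :
    ∑ s : Fin n → Bool, (⨆ t, ∑ i, rsign (s i) * Φ i t)
      ≤ ∑ s : Fin n → Bool, (⨆ t, ∑ i, rsign (s i) * Function.update Φ i₀ Ψ i t) := by
  classical
  set flip : (Fin n → Bool) → (Fin n → Bool) :=
    fun s => Function.update s i₀ (!(s i₀)) with hflip
  have hinv : Function.Involutive flip := by
    intro s; funext i
    by_cases h : i = i₀ <;> simp [hflip, Function.update_apply, h]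
  set X : (Fin n → Bool) → ℝ := fun s => ⨆ t, ∑ i, rsign (s i) * Φ i t with hX
  set Y : (Fin n → Bool) → ℝ :=
    fun s => ⨆ t, ∑ i, rsign (s i) * Function.update Φ i₀ Ψ i t with hY
  have hsumX : ∑ s, X (flip s) = ∑ s, X s :=
    Fintype.sum_bijective flip hinv.bijective _ _ (fun s => rfl)
  have hsumY : ∑ s, Y (flip s) = ∑ s, Y s :=
    Fintype.sum_bijective flip hinv.bijective _ _ (fun s => rfl)
  have per : ∀ s, X s + X (flip s) ≤ Y s + Y (flip s) := by
    intro s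
    set h : T → ℝ := fun t => ∑ i ∈ Finset.univ.erase i₀, rsign (s i) * Φ i t with hh
    have hhb : ∀ t, |h t| ≤ ∑ i ∈ Finset.univ.erase i₀, C i := by
      intro t
      refine (Finset.abs_sum_le_sum_abs _ _).trans (Finset.sum_le_sum fun i _ => ?_)
      rw [abs_rsign_mul]; exact hΦ i t
    have hflipe : ∀ i, i ≠ i₀ → (flip s) i = s i := by
      intro i hi; simp [hflip, Function.update_apply, hi]
    have hflip0 : rsign ((flip s) i₀) = -rsign (s i₀) := by
      simp [hflip, rsign_not]
    have eX : X s = ⨆ t, h t + rsign (s i₀) * Φ i₀ t := by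
      refine iSup_congr fun t => ?_
      rw [hh, ← Finset.sum_erase_add _ _ (Finset.mem_univ i₀)]
    have eXf : X (flip s) = ⨆ t, h t - rsign (s i₀) * Φ i₀ t := by
      refine iSup_congr fun t => ?_
      rw [← Finset.sum_erase_add _ _ (Finset.mem_univ i₀)]
      rw [hflip0]
      have : ∑ i ∈ Finset.univ.erase i₀, rsign (flip s i) * Φ i t = h t := by
        rw [hh]; exact Finset.sum_congr rfl fun i hi =>
          by rw [hflipe i (Finset.ne_of_mem_erase hi)]
      rw [this]; ring
    have eY : Y s = ⨆ t, h t + rsign (s i₀) * Ψ t := by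
      refine iSup_congr fun t => ?_
      rw [← Finset.sum_erase_add _ _ (Finset.mem_univ i₀), Function.update_self]
      congr 1
      rw [hh]; exact Finset.sum_congr rfl fun i hi =>
        by rw [Function.update_of_ne (Finset.ne_of_mem_erase hi)]
    have eYf : Y (flip s) = ⨆ t, h t - rsign (s i₀) * Ψ t := by
      refine iSup_congr fun t => ?_
      rw [← Finset.sum_erase_add _ _ (Finset.mem_univ i₀), Function.update_self, hflip0]
      have : ∑ i ∈ Finset.univ.erase i₀, rsign (flip s i) * Function.update Φ i₀ Ψ i t
          = h t := by
        rw [hh]; refine Finset.sum_congr rfl fun i hi => ?_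
        rw [hflipe i (Finset.ne_of_mem_erase hi),
          Function.update_of_ne (Finset.ne_of_mem_erase hi)]
      rw [this]; ring
    rw [eX, eXf, eY, eYf]
    refine pair_sup (CG := CΨ) hhb (fun t => ?_) (fun t u => ?_)
    · rw [abs_rsign_mul]; exact hΨ t
    · rw [← mul_sub, ← mul_sub, abs_rsign_mul, abs_rsign_mul]; exact hc t u
  have h1 : ∑ s, X s + ∑ s, X s ≤ ∑ s, Y s + ∑ s, Y s := by
    calc ∑ s, X s + ∑ s, X s = ∑ s, (X s + X (flip s)) := by
          rw [Finset.sum_add_distrib, hsumX]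
      _ ≤ ∑ s, (Y s + Y (flip s)) := Finset.sum_le_sum fun s _ => per s
      _ = ∑ s, Y s + ∑ s, Y s := by rw [Finset.sum_add_distrib, hsumY]
  linarith

lemma contraction {n : ℕ} (F G : Fin n → T → ℝ) (CF CG : Fin n → ℝ)
    (hF : ∀ i t, |F i t| ≤ CF i) (hG : ∀ i t, |G i t| ≤ CG i)
    (hc : ∀ i t u, |F i t - F i u| ≤ |G i t - G i u|) :
    ∑ s : Fin n → Bool, (⨆ t, ∑ i, rsign (s i) * F i t)
      ≤ ∑ s : Fin n → Bool, (⨆ t, ∑ i, rsign (s i) * G i t) := by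
  classical
  set H : ℕ → Fin n → T → ℝ := fun k i => if (i : ℕ) < k then G i else F i with hH
  have hHb : ∀ k i t, |H k i t| ≤ max (CF i) (CG i) := by
    intro k i t
    by_cases h : (i : ℕ) < k
    · simp only [hH, if_pos h]; exact (hG i t).trans (le_max_right _ _)
    · simp only [hH, if_neg h]; exact (hF i t).trans (le_max_left _ _)
  have main : ∀ k, k ≤ n →
      ∑ s : Fin n → Bool, (⨆ t, ∑ i, rsign (s i) * F i t)
        ≤ ∑ s : Fin n → Bool, (⨆ t, ∑ i, rsign (s i) * H k i t) := by
    intro k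
    induction k with
    | zero =>
      intro _
      have : H 0 = F := by funext i t; simp [hH]
      rw [this]
    | succ k ih =>
      intro hk
      have hkn : k < n := hk
      refine (ih (le_of_lt hkn)).trans ?_
      have hupd : H (k + 1) = Function.update (H k) ⟨k, hkn⟩ (G ⟨k, hkn⟩) := by
        funext i t
        by_cases h : i = (⟨k, hkn⟩ : Fin n)
        · subst h; simp [hH, Function.update_self]
        · rw [Function.update_of_ne h]
          have hik : (i : ℕ) ≠ k := fun hik => h (Fin.ext hik)
          have : (i : ℕ) < k + 1 ↔ (i : ℕ) < k := by omega
          simp only [hH, this]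
      rw [hupd]
      have hcc : ∀ t u : T, |H k ⟨k, hkn⟩ t - H k ⟨k, hkn⟩ u|
          ≤ |G ⟨k, hkn⟩ t - G ⟨k, hkn⟩ u| := by
        intro t u
        have e1 : H k ⟨k, hkn⟩ t = F ⟨k, hkn⟩ t := by simp [hH]
        have e2 : H k ⟨k, hkn⟩ u = F ⟨k, hkn⟩ u := by simp [hH]
        rw [e1, e2]; exact hc ⟨k, hkn⟩ t u
      exact step_update (H k) (fun i => max (CF i) (CG i)) (hHb k) ⟨k, hkn⟩
        (G ⟨k, hkn⟩) (CG ⟨k, hkn⟩) (hG ⟨k, hkn⟩) hcc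
  have : H n = G := by
    funext i t; simp [hH, i.isLt]
  rw [← this]
  exact main n le_rfl

end Abstract

/-! ### Lemmas about `dot2` and `l1` -/

lemma abs_dot2_le_l1 {d : ℕ} (u z : Vec d × Vec d) (hz : InCube z) :
    |dot2 u z| ≤ l1 u := by
  unfold dot2 l1
  refine (abs_add_le _ _).trans (add_le_add ?_ ?_)
  · refine (Finset.abs_sum_le_sum_abs _ _).trans (Finset.sum_le_sum fun j _ => ?_)
    rw [abs_mul]
    have h := hz.1 j
    have hz1 : |z.1 j| ≤ 1 := abs_le.2 ⟨by linarith [h.1], h.2⟩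
    exact mul_le_of_le_one_right (abs_nonneg _) hz1
  · refine (Finset.abs_sum_le_sum_abs _ _).trans (Finset.sum_le_sum fun j _ => ?_)
    rw [abs_mul]
    have h := hz.2 j
    have hz1 : |z.2 j| ≤ 1 := abs_le.2 ⟨by linarith [h.1], h.2⟩
    exact mul_le_of_le_one_right (abs_nonneg _) hz1

lemma dot2_le_l1 {d : ℕ} (u z : Vec d × Vec d) (hz : InCube z) :
    dot2 u z ≤ l1 u :=
  (le_abs_self _).trans (abs_dot2_le_l1 u z hz)

lemma dot2_add {d : ℕ} (u v z : Vec d × Vec d) :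
    dot2 (u + v) z = dot2 u z + dot2 v z := by
  simp only [dot2, Prod.fst_add, Prod.snd_add, Pi.add_apply, add_mul,
    Finset.sum_add_distrib]
  ring

lemma dot2_zero {d : ℕ} (z : Vec d × Vec d) : dot2 0 z = 0 := by
  simp [dot2]

lemma dot2_smul {d : ℕ} (r : ℝ) (u z : Vec d × Vec d) :
    dot2 (r • u) z = r * dot2 u z := by
  simp only [dot2, Prod.smul_fst, Prod.smul_snd, Pi.smul_apply, smul_eq_mul,
    Finset.mul_sum, mul_add]
  congr 1 <;> exact Finset.sum_congr rfl fun j _ => by ring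

lemma dot2_sum {d : ℕ} {ι : Type*} (s : Finset ι) (f : ι → Vec d × Vec d)
    (z : Vec d × Vec d) :
    dot2 (∑ i ∈ s, f i) z = ∑ i ∈ s, dot2 (f i) z := by
  classical
  induction s using Finset.cons_induction with
  | empty => simp [dot2_zero]
  | cons i s hi ih => rw [Finset.sum_cons, Finset.sum_cons, dot2_add, ih]

/-- **Rademacher contraction step for the `σ'` term in the proof of Theorem 3.6.** -/
theorem stmt_6 (d : ℕ) (hd : 1 ≤ d) (n : ℕ) (hn : 1 ≤ n)
    (σ : ℝ → ℝ) (hσ : ContDiff ℝ 2 σ)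
    (A : Vec d → Matrix (Fin d) (Fin d) ℝ)
    (hA : ∀ j k, ContDiff ℝ 1 fun x => A x j k)
    (divA : Vec d → Vec d)
    (hdiv : ∀ x k, divA x k = ∑ j, fderiv ℝ (fun x' => A x' j k) x (Pi.single j 1))
    (M : ℝ) (hM : 0 ≤ M)
    (hLip : ∀ v : Vec d × Vec d, ∀ b : ℝ, ∀ z₁ z₂ : Vec d × Vec d,
      InCube z₁ → InCube z₂ →
      |deriv σ (dot2 v z₁ + b) * (∑ k, divA z₁.1 k * v.1 k)
          - deriv σ (dot2 v z₂ + b) * (∑ k, divA z₂.1 k * v.1 k)|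
        ≤ (l1 v + |b|) ^ 2 * M * |dot2 v z₁ - dot2 v z₂|)
    (ε : ℝ) (hε : ε ∈ Set.Ioc (0:ℝ) 1)
    (a : Fin n → ℝ) (w : Fin n → Vec d × Vec d) (b : Fin n → ℝ) :
    (∑ s : Fin n → Bool, ⨆ z : {z : Vec d × Vec d // InCube z},
        (1 / (n:ℝ)) * ∑ i, rsign (s i) * a i * ε * (∑ k, divA z.1.1 k * (w i).1 k)
          * deriv σ ((dot2 (w i) z.1 + b i) / ε)) / 2 ^ n
      ≤ ε⁻¹ * M * ((∑ s : Fin n → Bool,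
          l1 ((1 / (n:ℝ)) • ∑ i, (rsign (s i) * |a i| * (l1 (w i) + |b i|) ^ 2) • w i))
            / 2 ^ n) := by
  classical
  obtain ⟨hε0, hε1⟩ := hε
  have hεne : ε ≠ 0 := ne_of_gt hε0
  have hn0 : (0:ℝ) < (n:ℝ) := by exact_mod_cast hn
  have hz0 : InCube ((fun _ => 0, fun _ => 0) : Vec d × Vec d) :=
    ⟨fun j => ⟨le_refl 0, zero_le_one⟩, fun j => ⟨le_refl 0, zero_le_one⟩⟩
  haveI : Nonempty {z : Vec d × Vec d // InCube z} := ⟨⟨_, hz0⟩⟩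
  set z₀ : {z : Vec d × Vec d // InCube z} := ⟨_, hz0⟩ with hz₀
  set c : Fin n → ℝ := fun i => |a i| * (l1 (w i) + |b i|) ^ 2 with hcdef
  have hc0 : ∀ i, 0 ≤ c i := fun i => mul_nonneg (abs_nonneg _) (sq_nonneg _)
  set F : Fin n → {z : Vec d × Vec d // InCube z} → ℝ := fun i z =>
    (1 / (n:ℝ)) * (a i * ε * (∑ k, divA z.1.1 k * (w i).1 k)
      * deriv σ ((dot2 (w i) z.1 + b i) / ε)) with hFdef
  set G : Fin n → {z : Vec d × Vec d // InCube z} → ℝ := fun i z =>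
    (1 / (n:ℝ)) * (ε⁻¹ * M * c i) * dot2 (w i) z.1 with hGdef
  have hconst0 : ∀ i, 0 ≤ (1 / (n:ℝ)) * (ε⁻¹ * M * c i) := fun i =>
    mul_nonneg (by positivity) (mul_nonneg (mul_nonneg (by positivity) hM) (hc0 i))
  -- key contraction estimate
  have hcon : ∀ i (z₁ z₂ : {z : Vec d × Vec d // InCube z}),
      |F i z₁ - F i z₂| ≤ |G i z₁ - G i z₂| := by
    intro i z₁ z₂
    set v : Vec d × Vec d :=
      (fun j => (w i).1 j / ε, fun j => (w i).2 j / ε) with hv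
    have hv1 : ∀ z : Vec d × Vec d, dot2 v z = dot2 (w i) z / ε := by
      intro z
      simp only [dot2, hv, div_mul_eq_mul_div, ← Finset.sum_div, ← add_div]
    have hl1v : l1 v = l1 (w i) / ε := by
      simp only [l1, hv, abs_div, abs_of_pos hε0, ← Finset.sum_div, ← add_div]
    have hDv : ∀ x : Vec d, ∑ k, divA x k * v.1 k
        = (∑ k, divA x k * (w i).1 k) / ε := by
      intro x
      simp only [hv]
      rw [Finset.sum_div]
      exact Finset.sum_congr rfl fun k _ => (mul_div_assoc _ _ _).symm
    have key := hLip v (b i / ε) z₁.1 z₂.1 z₁.2 z₂.2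
    rw [hv1, hv1, hl1v, hDv, hDv, ← add_div, ← add_div] at key
    -- key : |σ'((dot₁+b)/ε)*(D₁/ε) - σ'((dot₂+b)/ε)*(D₂/ε)|
    --        ≤ (l1 w/ε + |b/ε|)^2 * M * |dot₁/ε - dot₂/ε|
    have eG : |G i z₁ - G i z₂|
        = (1 / (n:ℝ)) * (ε⁻¹ * M * c i) * |dot2 (w i) z₁.1 - dot2 (w i) z₂.1| := by
      have : G i z₁ - G i z₂
          = ((1 / (n:ℝ)) * (ε⁻¹ * M * c i)) * (dot2 (w i) z₁.1 - dot2 (w i) z₂.1) := by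
        rw [hGdef]; ring
      rw [this, abs_mul, abs_of_nonneg (hconst0 i)]
    have eF : F i z₁ - F i z₂
        = ((1 / (n:ℝ)) * a i * (ε * ε))
          * (deriv σ ((dot2 (w i) z₁.1 + b i) / ε)
              * ((∑ k, divA z₁.1.1 k * (w i).1 k) / ε)
            - deriv σ ((dot2 (w i) z₂.1 + b i) / ε)
              * ((∑ k, divA z₂.1.1 k * (w i).1 k) / ε)) := by
      rw [hFdef]; field_simp
    have habs2 : |b i / ε| = |b i| / ε := by rw [abs_div, abs_of_pos hε0]
    have habs3 : |dot2 (w i) z₁.1 / ε - dot2 (w i) z₂.1 / ε|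
        = |dot2 (w i) z₁.1 - dot2 (w i) z₂.1| / ε := by
      rw [div_sub_div_same, abs_div, abs_of_pos hε0]
    have habs1 : |(1 / (n:ℝ)) * a i * (ε * ε)| = (1 / (n:ℝ)) * |a i| * (ε * ε) := by
      rw [abs_mul, abs_mul, abs_of_nonneg (by positivity : (0:ℝ) ≤ 1 / (n:ℝ)),
        abs_of_nonneg (by positivity : (0:ℝ) ≤ ε * ε)]
    calc |F i z₁ - F i z₂|
        = |(1 / (n:ℝ)) * a i * (ε * ε)|
          * |deriv σ ((dot2 (w i) z₁.1 + b i) / ε)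
              * ((∑ k, divA z₁.1.1 k * (w i).1 k) / ε)
            - deriv σ ((dot2 (w i) z₂.1 + b i) / ε)
              * ((∑ k, divA z₂.1.1 k * (w i).1 k) / ε)| := by rw [eF, abs_mul]
      _ ≤ |(1 / (n:ℝ)) * a i * (ε * ε)|
          * ((l1 (w i) / ε + |b i / ε|) ^ 2 * M
            * |dot2 (w i) z₁.1 / ε - dot2 (w i) z₂.1 / ε|) :=
        mul_le_mul_of_nonneg_left key (abs_nonneg _)
      _ = (1 / (n:ℝ)) * (ε⁻¹ * M * c i) * |dot2 (w i) z₁.1 - dot2 (w i) z₂.1| := by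
        rw [habs1, habs2, habs3, hcdef, ← add_div]
        field_simp
      _ = |G i z₁ - G i z₂| := eG.symm
  -- boundedness
  have hGb : ∀ i z, |G i z| ≤ (1 / (n:ℝ)) * (ε⁻¹ * M * c i) * l1 (w i) := by
    intro i z
    rw [hGdef]
    simp only []
    rw [abs_mul, abs_of_nonneg (hconst0 i)]
    exact mul_le_mul_of_nonneg_left (abs_dot2_le_l1 _ _ z.2) (hconst0 i)
  have hFb : ∀ i z, |F i z|
      ≤ |F i z₀| + 2 * ((1 / (n:ℝ)) * (ε⁻¹ * M * c i) * l1 (w i)) := by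
    intro i z
    have h1 : |F i z - F i z₀| ≤ |G i z - G i z₀| := hcon i z z₀
    have h2 : |G i z - G i z₀| ≤ |G i z| + |G i z₀| := abs_sub _ _
    have h3 : |F i z| ≤ |F i z₀| + |F i z - F i z₀| := by
      have := abs_add_le (F i z₀) (F i z - F i z₀)
      simpa using this
    have := hGb i z
    have := hGb i z₀
    linarith
  -- rewrite the LHS sup bodies
  have hbody : ∀ (s : Fin n → Bool) (z : {z : Vec d × Vec d // InCube z}),
      (1 / (n:ℝ)) * ∑ i, rsign (s i) * a i * ε * (∑ k, divA z.1.1 k * (w i).1 k)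
          * deriv σ ((dot2 (w i) z.1 + b i) / ε)
      = ∑ i, rsign (s i) * F i z := by
    intro s z
    rw [Finset.mul_sum]
    exact Finset.sum_congr rfl fun i _ => by rw [hFdef]; ring
  have step1 : (∑ s : Fin n → Bool, ⨆ z : {z : Vec d × Vec d // InCube z},
        (1 / (n:ℝ)) * ∑ i, rsign (s i) * a i * ε * (∑ k, divA z.1.1 k * (w i).1 k)
          * deriv σ ((dot2 (w i) z.1 + b i) / ε))
      = ∑ s : Fin n → Bool, ⨆ z, ∑ i, rsign (s i) * F i z :=
    Finset.sum_congr rfl fun s _ => iSup_congr (hbody s)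
  have step2 : (∑ s : Fin n → Bool, ⨆ z, ∑ i, rsign (s i) * F i z)
      ≤ ∑ s : Fin n → Bool, ⨆ z, ∑ i, rsign (s i) * G i z :=
    contraction F G
      (fun i => |F i z₀| + 2 * ((1 / (n:ℝ)) * (ε⁻¹ * M * c i) * l1 (w i)))
      (fun i => (1 / (n:ℝ)) * (ε⁻¹ * M * c i) * l1 (w i))
      hFb hGb hcon
  -- bound each `G`-sup by the ℓ¹ norm
  have step3 : ∀ s : Fin n → Bool,
      (⨆ z, ∑ i, rsign (s i) * G i z)
        ≤ (ε⁻¹ * M)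
          * l1 ((1 / (n:ℝ)) • ∑ i, (rsign (s i) * |a i| * (l1 (w i) + |b i|) ^ 2) • w i) := by
    intro s
    apply ciSup_le
    intro z
    set u : Vec d × Vec d :=
      (1 / (n:ℝ)) • ∑ i, (rsign (s i) * |a i| * (l1 (w i) + |b i|) ^ 2) • w i with hu
    have e : ∑ i, rsign (s i) * G i z = (ε⁻¹ * M) * dot2 u z.1 := by
      have hud : dot2 u z.1
          = (1 / (n:ℝ)) * ∑ i, (rsign (s i) * |a i| * (l1 (w i) + |b i|) ^ 2)
              * dot2 (w i) z.1 := by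
        rw [hu, dot2_smul, dot2_sum]
        congr 1
        exact Finset.sum_congr rfl fun i _ => dot2_smul _ _ _
      rw [hud, Finset.mul_sum, Finset.mul_sum]
      exact Finset.sum_congr rfl fun i _ => by rw [hGdef, hcdef]; ring
    rw [e]
    exact mul_le_mul_of_nonneg_left (dot2_le_l1 _ _ z.2)
      (mul_nonneg (inv_nonneg.2 hε0.le) hM)
  have chain : (∑ s : Fin n → Bool, ⨆ z : {z : Vec d × Vec d // InCube z},
        (1 / (n:ℝ)) * ∑ i, rsign (s i) * a i * ε * (∑ k, divA z.1.1 k * (w i).1 k)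
          * deriv σ ((dot2 (w i) z.1 + b i) / ε))
      ≤ ∑ s : Fin n → Bool, (ε⁻¹ * M)
          * l1 ((1 / (n:ℝ)) • ∑ i, (rsign (s i) * |a i| * (l1 (w i) + |b i|) ^ 2) • w i) := by
    rw [step1]
    exact step2.trans (Finset.sum_le_sum fun s _ => step3 s)
  have hrhs : ε⁻¹ * M * ((∑ s : Fin n → Bool,
        l1 ((1 / (n:ℝ)) • ∑ i, (rsign (s i) * |a i| * (l1 (w i) + |b i|) ^ 2) • w i))
          / 2 ^ n)
      = (∑ s : Fin n → Bool, (ε⁻¹ * M)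
          * l1 ((1 / (n:ℝ)) • ∑ i, (rsign (s i) * |a i| * (l1 (w i) + |b i|) ^ 2) • w i))
        / 2 ^ n := by
    rw [← Finset.mul_sum, mul_div_assoc]
  rw [hrhs]
  exact (div_le_div_iff_of_pos_right (by positivity : (0:ℝ) < 2 ^ n)).mpr chain
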